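/- Let k be a commutative ring, H a k-bialgebra, A a k-algebra, and ρ : A → A⊗H a k-linear map satisfying (2.1.1) ρ(ab) = ρ(a)ρ(b). Equip A⊗H with the right A-action (a⊗h)◁b = ab_{[0]}⊗hb_{[1]}. Define ε̄ : A⊗H → A by ε̄(a⊗h) = ε(h·1_{[1]})a·1_{[0]} and ε' : A⊗H → A by ε'(a⊗h) = ε(h)a. Then: (1) ε̄ is right A-linear (ε̄(ξ◁b) = ε̄(ξ)b for all ξ ∈ A⊗H, b ∈ A) if and only if condition (2.2.2) ε(a_{[1]})a_{[0]} = ε(1_{[1]})1_{[0]}a holds for all a ∈ A; (2) ε' is right A-linear if and only if condition (2.2.3) ε(a_{[1]})a_{[0]} = a holds for all a ∈ A (in which case ε' = ε̄). -/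
import Mathlib


open TensorProduct

/-- The map `ε' : A ⊗ H → A`, `a ⊗ h ↦ ε(h) a`. -/
noncomputable def counitMap (k A H : Type*) [CommRing k] [Ring A] [Algebra k A]
    [Ring H] [Bialgebra k H] :
    A ⊗[k] H →ₗ[k] A :=
  (TensorProduct.rid k A).toLinearMap ∘ₗ
    LinearMap.lTensor A (Coalgebra.counit (R := k) (A := H))

/-- `ε'` as an algebra homomorphism. -/
noncomputable def counitAlgMap (k A H : Type*) [CommRing k] [Ring A] [Algebra k A]
    [Ring H] [Bialgebra k H] :
    A ⊗[k] H →ₐ[k] A :=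
  (Algebra.TensorProduct.rid k k A).toAlgHom.comp
    (Algebra.TensorProduct.map (AlgHom.id k A) (Bialgebra.counitAlgHom k H))

lemma counitMap_eq_alg (k A H : Type*) [CommRing k] [Ring A] [Algebra k A]
    [Ring H] [Bialgebra k H] :
    counitMap k A H = (counitAlgMap k A H).toLinearMap := by
  ext a h
  simp [counitMap, counitAlgMap, Algebra.TensorProduct.rid_tmul]

lemma counitMap_mul (k A H : Type*) [CommRing k] [Ring A] [Algebra k A]
    [Ring H] [Bialgebra k H] (x y : A ⊗[k] H) :
    counitMap k A H (x * y) = counitMap k A H x * counitMap k A H y := by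
  simp [counitMap_eq_alg]

lemma counitMap_one (k A H : Type*) [CommRing k] [Ring A] [Algebra k A]
    [Ring H] [Bialgebra k H] :
    counitMap k A H 1 = 1 := by
  simp [counitMap_eq_alg]

/-- for `ρ : A → A ⊗ H` multiplicative and the right action `ξ ◁ b = ξ·ρ(b)`:
(1) `ε̄(ξ) = ε'(ξ·ρ(1))` is right `A`-linear iff (2.2.2) `ε(a₍₁₎)a₍₀₎ = ε(1₍₁₎)1₍₀₎·a`;
(2) `ε'` is right `A`-linear iff (2.2.3) `ε(a₍₁₎)a₍₀₎ = a`, in which case `ε' = ε̄`. -/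
theorem counit_right_linear_iff (k A H : Type*) [CommRing k] [Ring A] [Algebra k A]
    [Ring H] [Bialgebra k H] (ρ : A →ₗ[k] A ⊗[k] H)
    (h211 : ∀ a b : A, ρ (a * b) = ρ a * ρ b) :
    ((∀ (ξ : A ⊗[k] H) (b : A),
        counitMap k A H ((ξ * ρ b) * ρ 1) = counitMap k A H (ξ * ρ 1) * b) ↔
      (∀ a : A, counitMap k A H (ρ a) = counitMap k A H (ρ 1) * a)) ∧
    ((∀ (ξ : A ⊗[k] H) (b : A),
        counitMap k A H (ξ * ρ b) = counitMap k A H ξ * b) ↔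
      (∀ a : A, counitMap k A H (ρ a) = a)) ∧
    ((∀ a : A, counitMap k A H (ρ a) = a) →
      ∀ ξ : A ⊗[k] H, counitMap k A H ξ = counitMap k A H (ξ * ρ 1)) := by
  have key : ∀ a : A, ρ a * ρ 1 = ρ a := fun a => by rw [← h211, mul_one]
  refine ⟨⟨fun h a => ?_, fun h ξ b => ?_⟩, ⟨fun h a => ?_, fun h ξ b => ?_⟩, fun h ξ => ?_⟩
  · have := h 1 a
    rwa [one_mul, key, one_mul] at this
  · rw [mul_assoc, key, counitMap_mul, h, counitMap_mul, ← mul_assoc]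
  · have := h 1 a
    rwa [one_mul, counitMap_one, one_mul] at this
  · rw [counitMap_mul, h]
  · rw [counitMap_mul, h 1, mul_one]
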